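/- arXiv:1801.04155 — 4 statements merged into one kernel-verified Lean document; each statement's English description precedes it below -/
import Mathlib

section
/- Let $\mu > 0$, $p > 1$, let $g$ be defined as $g(s) = \left(\frac{p-1}{\mu}(1+\frac{\mu}{p-1}s)\ln(1+\frac{\mu}{p-1}s)\right)^{p-1}$ for $s \ge 0$, let $G(s) = \int_0^s g(t)\,dt$ and $H(s) = \frac{1}{p} g(s) s - G(s)$. Then there exists $R > 0$ such that for all $s, t$ with $R \le s \le t$, one has $H(s) \le (s/t)^{p-1} H(t)$. -/
/-!
Write `f = g`, so that `H s = f s * s / p - ∫₀ˢ f`. Then `s * H' - (p - 1) * H = F / p` with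
`F s = f' s * s² - 2 (p - 1) f s * s + p (p - 1) ∫₀ˢ f`, so `H s / s ^ (p - 1)` is nondecreasing
on `(0, ∞)` as soon as `F ≥ 0` there. As `F (0+) = 0`, it suffices that
`F' = f'' s² + 2 (2 - p) f' s + (p - 1)(p - 2) f ≥ 0`. For `f = I ^ (p - 1)`, where
`I s = (1 + a s) log (1 + a s) / a`, `u = 1 + a s` and `L = log u`, this is
`a² F' = (p - 1) I ^ (p - 3) ((p - 2)(u - 1 - L)² + L (u - 1)²)`, which is nonnegative because
`0 ≤ u - 1 - L ≤ L (u - 1)` (the second inequality is `1 - 1/u ≤ log u`). Hence any `R > 0` works.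
-/

open Real Set Filter Topology

lemma monotoneOn_Ioi_of_hasDerivAt_nonneg {F F' : ℝ → ℝ} {a : ℝ}
    (hF : ∀ x > a, HasDerivAt F (F' x) x) (hF' : ∀ x > a, 0 ≤ F' x) :
    MonotoneOn F (Ioi a) := by
  refine monotoneOn_of_hasDerivWithinAt_nonneg (f' := F') (convex_Ioi a)
    (fun x hx => (hF x hx).continuousAt.continuousWithinAt) ?_ ?_ <;> rw [interior_Ioi]
  · exact fun x hx => (hF x hx).hasDerivWithinAt
  · exact hF'

section Primitive

variable {f : ℝ → ℝ}

lemma hasDerivAt_integral_zero_of_continuousOn_Ici (hf : ContinuousOn f (Ici 0)) {s : ℝ}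
    (hs : 0 < s) : HasDerivAt (fun x => ∫ t in (0:ℝ)..x, f t) (f s) s :=
  intervalIntegral.integral_hasDerivAt_right
    ((hf.mono (uIcc_of_le hs.le ▸ Icc_subset_Ici_self)).intervalIntegrable)
    ((hf.mono Ioi_subset_Ici_self).stronglyMeasurableAtFilter isOpen_Ioi s hs)
    (hf.continuousAt (Ici_mem_nhds hs))

lemma tendsto_integral_zero_nhdsGT (hf : ContinuousOn f (Ici 0)) :
    Tendsto (fun x => ∫ t in (0:ℝ)..x, f t) (𝓝[>] 0) (𝓝 0) := by
  have hint : MeasureTheory.IntegrableOn f (uIcc 0 1) := by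
    rw [uIcc_of_le zero_le_one]
    exact (hf.mono Icc_subset_Ici_self).integrableOn_Icc
  have hcont : ContinuousWithinAt (fun x => ∫ t in (0:ℝ)..x, f t) (uIcc 0 1) 0 :=
    intervalIntegral.continuousOn_primitive_interval hint 0 left_mem_uIcc
  rw [uIcc_of_le zero_le_one] at hcont
  simpa using (hcont.mono_of_mem_nhdsWithin (Icc_mem_nhdsGT zero_lt_one)).tendsto

end Primitive

section SecondOrderCriterion

variable {f f' f'' : ℝ → ℝ} {p : ℝ}

lemma deriv_mul_sq_sub_add_integral_nonneg (hf : ContinuousOn f (Ici 0))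
    (hf' : ∀ s > 0, HasDerivAt f (f' s) s) (hf'' : ∀ s > 0, HasDerivAt f' (f'' s) s)
    (hlim : Tendsto (fun s => f' s * s ^ 2) (𝓝[>] 0) (𝓝 0))
    (hconv : ∀ s > 0, 0 ≤ f'' s * s ^ 2 + 2 * (2 - p) * f' s * s + (p - 1) * (p - 2) * f s)
    {s : ℝ} (hs : 0 < s) :
    0 ≤ f' s * s ^ 2 - 2 * (p - 1) * f s * s + p * (p - 1) * ∫ t in (0:ℝ)..s, f t := by
  set F := fun s => f' s * s ^ 2 - 2 * (p - 1) * f s * s + p * (p - 1) * ∫ t in (0:ℝ)..s, f t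
  have hderiv : ∀ x > 0, HasDerivAt F
      (f'' x * x ^ 2 + 2 * (2 - p) * f' x * x + (p - 1) * (p - 2) * f x) x := by
    intro x hx
    have h := (((hf'' x hx).mul (hasDerivAt_pow 2 x)).sub
      (((hf' x hx).mul (hasDerivAt_id x)).const_mul (2 * (p - 1)))).add
      ((hasDerivAt_integral_zero_of_continuousOn_Ici hf hx).const_mul (p * (p - 1)))
    refine (h.congr_of_eventuallyEq (.of_forall fun y => ?_)).congr_deriv ?_
    · simp only [F, Pi.add_apply, Pi.sub_apply, Pi.mul_apply, id]
      ring
    · simp only [id, Nat.cast_ofNat]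
      ring
  have hmono : MonotoneOn F (Ioi 0) := monotoneOn_Ioi_of_hasDerivAt_nonneg hderiv hconv
  have hF0 : Tendsto F (𝓝[>] 0) (𝓝 0) := by
    have hfs : Tendsto (fun x => f x * x) (𝓝[>] 0) (𝓝 0) := by
      simpa using ((hf 0 self_mem_Ici).tendsto.mono_left
        (nhdsWithin_mono 0 Ioi_subset_Ici_self)).mul (tendsto_nhdsWithin_of_tendsto_nhds tendsto_id)
    simpa [F, mul_assoc] using (hlim.sub (hfs.const_mul (2 * (p - 1)))).add
      ((tendsto_integral_zero_nhdsGT hf).const_mul (p * (p - 1)))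
  refine le_of_tendsto hF0 ?_
  filter_upwards [Ioc_mem_nhdsGT hs] with x hx
  exact hmono hx.1 hs hx.2

theorem monotoneOn_div_rpow_of_second_order (hp : 0 < p) (hf : ContinuousOn f (Ici 0))
    (hf' : ∀ s > 0, HasDerivAt f (f' s) s) (hf'' : ∀ s > 0, HasDerivAt f' (f'' s) s)
    (hlim : Tendsto (fun s => f' s * s ^ 2) (𝓝[>] 0) (𝓝 0))
    (hconv : ∀ s > 0, 0 ≤ f'' s * s ^ 2 + 2 * (2 - p) * f' s * s + (p - 1) * (p - 2) * f s) :
    MonotoneOn (fun s => (f s * s / p - ∫ t in (0:ℝ)..s, f t) / s ^ (p - 1)) (Ioi 0) := by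
  set H := fun s => f s * s / p - ∫ t in (0:ℝ)..s, f t
  have hH : ∀ s > 0, HasDerivAt H ((f' s * s + f s) / p - f s) s := fun s hs => by
    have h := (((hf' s hs).mul (hasDerivAt_id s)).div_const p).sub
      (hasDerivAt_integral_zero_of_continuousOn_Ici hf hs)
    refine (h.congr_of_eventuallyEq (.of_forall fun y => rfl)).congr_deriv ?_
    simp only [id, mul_one]
  refine monotoneOn_Ioi_of_hasDerivAt_nonneg
    (fun s hs => (hH s hs).div (hasDerivAt_rpow_const (Or.inl hs.ne')) (by positivity)) ?_
  intro s hs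
  have hs' : (0:ℝ) < s := hs
  have hsplit : s ^ (p - 1) = s ^ (p - 2) * s := by
    rw [← rpow_add_one hs'.ne']; ring_nf
  have hkey : ((f' s * s + f s) / p - f s) * s ^ (p - 1) - H s * ((p - 1) * s ^ (p - 1 - 1)) =
      s ^ (p - 2) / p *
        (f' s * s ^ 2 - 2 * (p - 1) * f s * s + p * (p - 1) * ∫ t in (0:ℝ)..s, f t) := by
    rw [hsplit, show p - 1 - 1 = p - 2 by ring]
    simp only [H]
    field_simp
    ring
  rw [hkey]
  have := deriv_mul_sq_sub_add_integral_nonneg hf hf' hf'' hlim hconv hs'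
  positivity

end SecondOrderCriterion

noncomputable def shiftedMulLog (a s : ℝ) : ℝ := (1 + a * s) * log (1 + a * s) / a

section ShiftedMulLog

variable {a s : ℝ}

lemma shiftedMulLog_pos (ha : 0 < a) (hs : 0 < s) : 0 < shiftedMulLog a s := by
  have hu : 1 < 1 + a * s := by nlinarith
  have := log_pos hu
  unfold shiftedMulLog
  positivity

lemma continuous_shiftedMulLog (a : ℝ) : Continuous (shiftedMulLog a) :=
  ((continuous_const.add (continuous_const.mul continuous_id)).mul_log).div_const a

lemma hasDerivAt_shiftedMulLog (ha : a ≠ 0) (hs : 1 + a * s ≠ 0) :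
    HasDerivAt (shiftedMulLog a) (log (1 + a * s) + 1) s := by
  have hlin : HasDerivAt (fun s => 1 + a * s) a s := by
    simpa using ((hasDerivAt_id s).const_mul a).const_add 1
  refine (((hasDerivAt_mul_log hs).comp s hlin).div_const a).congr_deriv ?_
  field_simp

lemma tendsto_shiftedMulLog_div_self (ha : a ≠ 0) :
    Tendsto (fun s => shiftedMulLog a s / s) (𝓝[>] 0) (𝓝 1) := by
  have hd : HasDerivAt (shiftedMulLog a) 1 0 := by
    simpa using hasDerivAt_shiftedMulLog (s := 0) ha (by norm_num)
  refine ((hasDerivAt_iff_tendsto_slope.mp hd).mono_left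
    (nhdsWithin_mono 0 fun x hx => ne_of_gt hx)).congr fun x => ?_
  simp [slope_def_field, shiftedMulLog]

end ShiftedMulLog

lemma sub_one_sub_log_sq_le {u : ℝ} (hu : 1 ≤ u) :
    (u - 1 - log u) ^ 2 ≤ log u * (u - 1) ^ 2 := by
  have hlog : 0 ≤ log u := log_nonneg hu
  have h0 : 0 ≤ u - 1 - log u := by linarith [log_le_sub_one_of_pos (by linarith : 0 < u)]
  have h1 : u - 1 - log u ≤ log u * (u - 1) := by
    have := mul_le_mul_of_nonneg_left (one_sub_inv_le_log_of_pos (by linarith : 0 < u))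
      (by linarith : (0:ℝ) ≤ u)
    rw [mul_sub, mul_one, mul_inv_cancel₀ (by linarith)] at this
    linarith
  calc (u - 1 - log u) ^ 2 = (u - 1 - log u) * (u - 1 - log u) := sq _
    _ ≤ (u - 1 - log u) * (log u * (u - 1)) := mul_le_mul_of_nonneg_left h1 h0
    _ ≤ (u - 1) * (log u * (u - 1)) :=
      mul_le_mul_of_nonneg_right (by linarith) (mul_nonneg hlog (by linarith))
    _ = log u * (u - 1) ^ 2 := by ring

section ShiftedMulLogRpow

variable {a p s : ℝ}

lemma hasDerivAt_shiftedMulLog_rpow (ha : 0 < a) (hs : 0 < s) :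
    HasDerivAt (fun s => shiftedMulLog a s ^ (p - 1))
      ((p - 1) * shiftedMulLog a s ^ (p - 2) * (log (1 + a * s) + 1)) s := by
  have h := (hasDerivAt_rpow_const (p := p - 1) (Or.inl (shiftedMulLog_pos ha hs).ne')).comp s
    (hasDerivAt_shiftedMulLog ha.ne' (by nlinarith))
  rwa [show p - 1 - 1 = p - 2 by ring] at h

lemma hasDerivAt_deriv_shiftedMulLog_rpow (ha : 0 < a) (hs : 0 < s) :
    HasDerivAt (fun s => (p - 1) * shiftedMulLog a s ^ (p - 2) * (log (1 + a * s) + 1))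
      ((p - 1) * ((p - 2) * shiftedMulLog a s ^ (p - 3) * (log (1 + a * s) + 1) ^ 2 +
        shiftedMulLog a s ^ (p - 2) * (a / (1 + a * s)))) s := by
  have hu : 1 + a * s ≠ 0 := by nlinarith
  have hI := hasDerivAt_shiftedMulLog ha.ne' hu
  have hpow := (hasDerivAt_rpow_const (p := p - 2) (Or.inl (shiftedMulLog_pos ha hs).ne')).comp s hI
  have hlog : HasDerivAt (fun s => log (1 + a * s) + 1) (a / (1 + a * s)) s := by
    have hlin : HasDerivAt (fun s => 1 + a * s) a s := by
      simpa using ((hasDerivAt_id s).const_mul a).const_add 1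
    exact (hlin.log hu).add_const 1
  refine ((hpow.const_mul (p - 1)).mul hlog).congr_deriv ?_
  rw [show p - 2 - 1 = p - 3 by ring]
  simp only [Function.comp]
  ring

lemma tendsto_deriv_shiftedMulLog_rpow_mul_sq (ha : 0 < a) (hp : 1 < p) :
    Tendsto (fun s => (p - 1) * shiftedMulLog a s ^ (p - 2) * (log (1 + a * s) + 1) * s ^ 2)
      (𝓝[>] 0) (𝓝 0) := by
  have hratio : Tendsto (fun s => (shiftedMulLog a s / s) ^ (p - 2)) (𝓝[>] 0) (𝓝 1) := by
    simpa using (tendsto_shiftedMulLog_div_self ha.ne').rpow_const (p := p - 2) (Or.inl one_ne_zero)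
  have hpow : Tendsto (fun s : ℝ => s ^ p) (𝓝[>] 0) (𝓝 0) := by
    simpa [zero_rpow (by linarith : p ≠ 0)] using
      ((continuousAt_rpow_const 0 p (Or.inr (by linarith))).tendsto).mono_left nhdsWithin_le_nhds
  have hlog : Tendsto (fun s => log (1 + a * s) + 1) (𝓝[>] 0) (𝓝 1) := by
    have hc : ContinuousAt (fun s => log (1 + a * s) + 1) 0 :=
      ((continuousAt_const.add (continuousAt_const.mul continuousAt_id)).log (by simp)).add_const 1
    simpa using hc.tendsto.mono_left nhdsWithin_le_nhds
  have h := ((hratio.mul hpow).mul hlog).const_mul (p - 1)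
  rw [one_mul, zero_mul, mul_zero] at h
  refine h.congr' ?_
  filter_upwards [self_mem_nhdsWithin] with s (hs : 0 < s)
  have hI := (shiftedMulLog_pos ha hs).le
  rw [div_rpow hI hs.le, show s ^ p = s ^ (p - 2) * s ^ 2 by
    rw [← rpow_natCast, ← rpow_add hs]; norm_num]
  field_simp

lemma second_order_shiftedMulLog_rpow_nonneg (ha : 0 < a) (hp : 1 < p) (hs : 0 < s) :
    0 ≤ (p - 1) * ((p - 2) * shiftedMulLog a s ^ (p - 3) * (log (1 + a * s) + 1) ^ 2 +
        shiftedMulLog a s ^ (p - 2) * (a / (1 + a * s))) * s ^ 2 +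
      2 * (2 - p) * ((p - 1) * shiftedMulLog a s ^ (p - 2) * (log (1 + a * s) + 1)) * s +
      (p - 1) * (p - 2) * shiftedMulLog a s ^ (p - 1) := by
  have hI := shiftedMulLog_pos ha hs
  set u := 1 + a * s
  set L := log u
  have hu1 : 1 ≤ u := by nlinarith
  have hs_eq : s = (u - 1) / a := by field_simp; linarith
  have hI_eq : shiftedMulLog a s = u * L / a := rfl
  have hpow2 : shiftedMulLog a s ^ (p - 2) = shiftedMulLog a s ^ (p - 3) * shiftedMulLog a s := by
    rw [← rpow_add_one hI.ne']; ring_nf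
  have hpow1 :
      shiftedMulLog a s ^ (p - 1) = shiftedMulLog a s ^ (p - 3) * shiftedMulLog a s ^ 2 := by
    rw [← rpow_natCast, ← rpow_add hI]; ring_nf
  have hfactor : (p - 1) * ((p - 2) * shiftedMulLog a s ^ (p - 3) * (L + 1) ^ 2 +
        shiftedMulLog a s ^ (p - 2) * (a / u)) * s ^ 2 +
      2 * (2 - p) * ((p - 1) * shiftedMulLog a s ^ (p - 2) * (L + 1)) * s +
      (p - 1) * (p - 2) * shiftedMulLog a s ^ (p - 1) =
      (p - 1) * shiftedMulLog a s ^ (p - 3) / a ^ 2 *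
        ((p - 2) * (u - 1 - L) ^ 2 + L * (u - 1) ^ 2) := by
    rw [hpow2, hpow1, hI_eq, hs_eq]
    field_simp
    ring
  rw [hfactor]
  have hgap := sub_one_sub_log_sq_le hu1
  have hbracket : 0 ≤ (p - 2) * (u - 1 - L) ^ 2 + L * (u - 1) ^ 2 := by
    nlinarith [sq_nonneg (u - 1 - L)]
  have := rpow_pos_of_pos hI (p - 3)
  have : 0 < p - 1 := by linarith
  positivity

theorem monotoneOn_shiftedMulLog_rpow (ha : 0 < a) (hp : 1 < p) :
    MonotoneOn (fun s => (shiftedMulLog a s ^ (p - 1) * s / p -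
      ∫ t in (0:ℝ)..s, shiftedMulLog a t ^ (p - 1)) / s ^ (p - 1)) (Ioi 0) :=
  monotoneOn_div_rpow_of_second_order (by linarith)
    ((continuous_shiftedMulLog a).continuousOn.rpow_const fun _ _ => Or.inr (by linarith))
    (fun _ hs => hasDerivAt_shiftedMulLog_rpow ha hs)
    (fun _ hs => hasDerivAt_deriv_shiftedMulLog_rpow ha hs)
    (tendsto_deriv_shiftedMulLog_rpow_mul_sq ha hp)
    (fun _ hs => second_order_shiftedMulLog_rpow_nonneg ha hp hs)

end ShiftedMulLogRpow

theorem stmt_3 (p μ : ℝ) (hp : 1 < p) (hμ : 0 < μ)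
    (g G H : ℝ → ℝ)
    (hg : ∀ s : ℝ, 0 ≤ s →
      g s = ((p - 1) / μ * (1 + μ / (p - 1) * s) * Real.log (1 + μ / (p - 1) * s)) ^ (p - 1))
    (hG : ∀ s : ℝ, G s = ∫ t in (0:ℝ)..s, g t)
    (hH : ∀ s : ℝ, H s = (1 / p) * g s * s - G s) :
    ∃ R : ℝ, 0 < R ∧ ∀ s t : ℝ, R ≤ s → s ≤ t → H s ≤ (s / t) ^ (p - 1) * H t := by
  set a := μ / (p - 1)
  have ha : 0 < a := div_pos hμ (by linarith)
  have hga : ∀ s, 0 ≤ s → g s = shiftedMulLog a s ^ (p - 1) := fun s hs => by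
    rw [hg s hs, shiftedMulLog]
    congr 1
    simp only [a]
    field_simp
  have hHa : ∀ s, 0 ≤ s → H s = shiftedMulLog a s ^ (p - 1) * s / p -
      ∫ t in (0:ℝ)..s, shiftedMulLog a t ^ (p - 1) := fun s hs => by
    rw [hH, hG, hga s hs, intervalIntegral.integral_congr fun t ht => hga t ?_]
    · ring
    · exact (uIcc_of_le hs ▸ ht).1
  refine ⟨1, one_pos, fun s t hs hst => ?_⟩
  have hs0 : 0 < s := by linarith
  have ht0 : 0 < t := by linarith
  have hmono := monotoneOn_shiftedMulLog_rpow ha hp hs0 ht0 hst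
  simp only [← hHa s hs0.le, ← hHa t ht0.le] at hmono
  calc H s = H s / s ^ (p - 1) * s ^ (p - 1) := by field_simp
    _ ≤ H t / t ^ (p - 1) * s ^ (p - 1) := mul_le_mul_of_nonneg_right hmono (by positivity)
    _ = (s / t) ^ (p - 1) * H t := by rw [div_rpow hs0.le ht0.le]; ring
end

section
/- Let $\mu > 0$, $p \ge 2$, and define $\kappa(s) = (1+\frac{\mu}{p-1}s)^{p-2}\left(\ln(1+\frac{\mu}{p-1}s)\right)^{p-2}\left(\left(\frac{\mu s}{p-1}\right)^2 + \ln(1+\frac{\mu}{p-1}s)\right) - \mu \int_0^s (1+\frac{\mu}{p-1}t)^{p-1}\left(\ln(1+\frac{\mu}{p-1}t)\right)^{p-2} dt$ for $s \ge 0$. Then $\kappa(s) > 0$ for all $s > 0$. -/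
/-!
Substituting `x = μ s / (p - 1)` and `q = p - 2` turns `κ s` into `kappa q x`. With `u = 1 + x`
and `L = log u`, its derivative is `u^(q-1) L^(q-1) (q (x - L)^2 + x^2 L)`, which is positive for
`x > 0` since `L > 0` there. As `kappa q 0 = 0`, `kappa q` is strictly increasing on `[0, ∞)` and
hence positive on `(0, ∞)`.
-/

open Real Set

theorem hasDerivAt_integral_of_continuousOn_Ioi {f : ℝ → ℝ} {a b x : ℝ}
    (hf : ContinuousOn f (Ioi a)) (hb : a < b) (hx : a < x) :
    HasDerivAt (fun t => ∫ y in b..t, f y) (f x) x := by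
  have hsub : uIcc b x ⊆ Ioi a := (convex_Ioi a).ordConnected.uIcc_subset hb hx
  exact intervalIntegral.integral_hasDerivAt_right ((hf.mono hsub).intervalIntegrable)
    (hf.stronglyMeasurableAtFilter isOpen_Ioi x hx) (hf.continuousAt (Ioi_mem_nhds hx))

noncomputable def kappa (q x : ℝ) : ℝ :=
  (1 + x) ^ q * log (1 + x) ^ q * (x ^ 2 + log (1 + x))
    - (q + 1) * ∫ y in (0:ℝ)..x, (1 + y) ^ (q + 1) * log (1 + y) ^ q

theorem kappa_comp_mul (q c s : ℝ) :
    (1 + c * s) ^ q * log (1 + c * s) ^ q * ((c * s) ^ 2 + log (1 + c * s))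
      - c * (q + 1) * ∫ t in (0:ℝ)..s, (1 + c * t) ^ (q + 1) * log (1 + c * t) ^ q
      = kappa q (c * s) := by
  have hsubst := intervalIntegral.mul_integral_comp_mul_left (a := 0) (b := s)
    (f := fun y => (1 + y) ^ (q + 1) * log (1 + y) ^ q) c
  rw [mul_zero] at hsubst
  rw [kappa, ← hsubst]
  ring

@[simp]
theorem kappa_zero (q : ℝ) : kappa q 0 = 0 := by
  simp [kappa]

theorem continuousOn_one_add_rpow_succ_mul_log_rpow {q : ℝ} (hq : 0 ≤ q) :
    ContinuousOn (fun y : ℝ => (1 + y) ^ (q + 1) * log (1 + y) ^ q) (Ioi (-1)) := by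
  have hpos : ∀ y ∈ Ioi (-1 : ℝ), 1 + y ≠ 0 := fun y hy => by
    simp only [mem_Ioi] at hy; linarith
  have hu : ContinuousOn (fun y : ℝ => 1 + y) (Ioi (-1)) := by fun_prop
  exact (hu.rpow_const fun y hy => Or.inl (hpos y hy)).mul
    ((hu.log hpos).rpow_const fun _ _ => Or.inr hq)

theorem hasDerivAt_one_add_rpow_mul_log_rpow {q x : ℝ} (hx : 0 < x) :
    HasDerivAt (fun y : ℝ => (1 + y) ^ q * log (1 + y) ^ q)
      (q * (1 + x) ^ (q - 1) * log (1 + x) ^ (q - 1) * (log (1 + x) + 1)) x := by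
  have hu : 0 < 1 + x := by linarith
  have hL : 0 < log (1 + x) := log_pos (by linarith)
  have hdu : HasDerivAt (fun y : ℝ => 1 + y) 1 x := (hasDerivAt_id x).const_add 1
  have hdL : HasDerivAt (fun y : ℝ => log (1 + y)) (1 / (1 + x)) x := by
    simpa [one_div] using hdu.log hu.ne'
  refine ((hdu.rpow_const (p := q) (Or.inl hu.ne')).mul
    (hdL.rpow_const (p := q) (Or.inl hL.ne'))).congr_deriv ?_
  rw [rpow_sub_one hu.ne', rpow_sub_one hL.ne']
  field_simp

theorem hasDerivAt_kappa {q x : ℝ} (hq : 0 ≤ q) (hx : 0 < x) :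
    HasDerivAt (kappa q)
      ((1 + x) ^ (q - 1) * log (1 + x) ^ (q - 1)
        * (q * (x - log (1 + x)) ^ 2 + x ^ 2 * log (1 + x))) x := by
  have hu : 0 < 1 + x := by linarith
  have hL : 0 < log (1 + x) := log_pos (by linarith)
  have hdL : HasDerivAt (fun y : ℝ => log (1 + y)) (1 / (1 + x)) x := by
    simpa [one_div] using ((hasDerivAt_id x).const_add 1).log hu.ne'
  have hdQ : HasDerivAt (fun y : ℝ => y ^ 2 + log (1 + y)) (2 * x + 1 / (1 + x)) x := by
    simpa using (hasDerivAt_pow 2 x).fun_add hdL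
  have hdI := hasDerivAt_integral_of_continuousOn_Ioi (continuousOn_one_add_rpow_succ_mul_log_rpow hq)
    (b := 0) (by norm_num) (by linarith : (-1 : ℝ) < x)
  refine (((hasDerivAt_one_add_rpow_mul_log_rpow hx).mul hdQ).sub (hdI.const_mul (q + 1))).congr_deriv ?_
  rw [rpow_add hu, rpow_sub_one hu.ne', rpow_sub_one hL.ne', rpow_one]
  field_simp
  ring

theorem deriv_kappa_pos {q x : ℝ} (hq : 0 ≤ q) (hx : 0 < x) : 0 < deriv (kappa q) x := by
  have hL : 0 < log (1 + x) := log_pos (by linarith)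
  have hbracket : 0 < q * (x - log (1 + x)) ^ 2 + x ^ 2 * log (1 + x) := by positivity
  rw [(hasDerivAt_kappa hq hx).deriv]
  have := rpow_pos_of_pos hL (q - 1)
  have := rpow_pos_of_pos (by linarith : 0 < 1 + x) (q - 1)
  positivity

theorem continuousOn_kappa {q : ℝ} (hq : 0 ≤ q) : ContinuousOn (kappa q) (Ici 0) := by
  have hpos : ∀ x ∈ Ici (0 : ℝ), 1 + x ≠ 0 := fun x hx => by
    simp only [mem_Ici] at hx; linarith
  have hu : ContinuousOn (fun x : ℝ => 1 + x) (Ici 0) := by fun_prop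
  have hL : ContinuousOn (fun x : ℝ => log (1 + x)) (Ici 0) := hu.log hpos
  have hI : ContinuousOn
      (fun x => ∫ y in (0:ℝ)..x, (1 + y) ^ (q + 1) * log (1 + y) ^ q) (Ici 0) :=
    fun x hx => (hasDerivAt_integral_of_continuousOn_Ioi (continuousOn_one_add_rpow_succ_mul_log_rpow hq)
      (by norm_num) (by simp only [mem_Ici] at hx; linarith)).continuousAt.continuousWithinAt
  exact (((hu.rpow_const fun x hx => Or.inl (hpos x hx)).mul
    (hL.rpow_const fun _ _ => Or.inr hq)).mul ((continuousOn_pow 2).add hL)).sub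
    (continuousOn_const.mul hI)

theorem strictMonoOn_kappa {q : ℝ} (hq : 0 ≤ q) : StrictMonoOn (kappa q) (Ici 0) :=
  strictMonoOn_of_deriv_pos (convex_Ici 0) (continuousOn_kappa hq) fun x hx =>
    deriv_kappa_pos hq (by simpa using hx)

theorem kappa_pos {q x : ℝ} (hq : 0 ≤ q) (hx : 0 < x) : 0 < kappa q x := by
  simpa using strictMonoOn_kappa hq (mem_Ici.2 le_rfl) hx.le hx

theorem stmt_4 (p μ : ℝ) (hp : 2 ≤ p) (hμ : 0 < μ)
    (κ : ℝ → ℝ)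
    (hκ : ∀ s : ℝ, 0 ≤ s →
      κ s = (1 + μ / (p - 1) * s) ^ (p - 2) * (Real.log (1 + μ / (p - 1) * s)) ^ (p - 2) *
              ((μ * s / (p - 1)) ^ 2 + Real.log (1 + μ / (p - 1) * s))
            - μ * ∫ t in (0:ℝ)..s,
                (1 + μ / (p - 1) * t) ^ (p - 1) * (Real.log (1 + μ / (p - 1) * t)) ^ (p - 2)) :
    ∀ s : ℝ, 0 < s → 0 < κ s := by
  intro s hs
  have hp1 : p - 1 ≠ 0 := by linarith
  rw [hκ s hs.le, show μ * s / (p - 1) = μ / (p - 1) * s by ring]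
  set c := μ / (p - 1) with hc_def
  have hc : 0 < c := div_pos hμ (by linarith)
  have hμ_eq : μ = c * (p - 2 + 1) := by rw [hc_def]; field_simp; ring
  rw [show p - 1 = p - 2 + 1 by ring, hμ_eq, kappa_comp_mul]
  exact kappa_pos (by linarith) (mul_pos hc hs)
end

section
/- (Picone-type identity) Let $\Omega \subset \mathbb{R}^N$ and let $u, v : \Omega \to \mathbb{R}$ be differentiable with $u \ge 0$ and $v > 0$ on $\Omega$, and $p > 1$. Define pointwise $L(u,v) = |\nabla u|^p + (p-1)(u/v)^p|\nabla v|^p - p(u/v)^{p-1}|\nabla v|^{p-2}\nabla v \cdot \nabla u$ and $R(u,v) = |\nabla u|^p - \nabla(u^p/v^{p-1})\cdot|\nabla v|^{p-2}\nabla v$. Then $L(u,v) = R(u,v)$ and $L(u,v) \ge 0$ pointwise on $\Omega$. -/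
open Real
open scoped RealInnerProductSpace

/-! With `t = u / v`, the quotient rule gives
`∇(u ^ p / v ^ (p - 1)) = p t ^ (p - 1) ∇u - (p - 1) t ^ p ∇v`,
which turns `R(u, v)` into `L(u, v)`.
Nonnegativity of `L` is Cauchy–Schwarz followed by Young's inequality with the conjugate exponents
`p` and `p / (p - 1)`. -/

theorem Real.young_inequality_rpow_sub_one {a b p : ℝ} (ha : 0 ≤ a) (hb : 0 ≤ b)
    (hp : 1 < p) :
    p * (a * b ^ (p - 1)) ≤ a ^ p + (p - 1) * b ^ p := by
  have hp1 : 0 < p - 1 := by linarith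
  have hyoung :=
    young_inequality_of_nonneg ha (rpow_nonneg hb (p - 1)) (HolderConjugate.conjExponent hp)
  have hq : (p - 1) * p.conjExponent = p := by
    rw [conjExponent]
    field_simp
  rw [← rpow_mul hb, hq, conjExponent] at hyoung
  calc p * (a * b ^ (p - 1)) ≤ p * (a ^ p / p + b ^ p / (p / (p - 1))) := by gcongr
    _ = a ^ p + (p - 1) * b ^ p := by field_simp

section InnerProductSpace

variable {E : Type*} [NormedAddCommGroup E] [InnerProductSpace ℝ E]

theorem inner_smul_sub_smul_rpow_norm_smul {p : ℝ} (hp : p ≠ 0) (s t : ℝ) (a b : E) :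
    ⟪s • a - t • b, ‖b‖ ^ (p - 2) • b⟫ =
      s * ‖b‖ ^ (p - 2) * ⟪b, a⟫ - t * ‖b‖ ^ p := by
  have hnorm : ‖b‖ ^ (p - 2) * ‖b‖ ^ 2 = ‖b‖ ^ p := by
    rw [← rpow_natCast, ← rpow_add' (norm_nonneg b) (by simpa using hp)]
    norm_num
  rw [inner_sub_left, real_inner_smul_left, real_inner_smul_left, real_inner_smul_right,
    real_inner_smul_right, real_inner_self_eq_norm_sq, real_inner_comm a b, ← hnorm]
  ring

theorem picone_inner_le {p t : ℝ} (hp : 1 < p) (ht : 0 ≤ t) (a b : E) :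
    p * t ^ (p - 1) * ‖b‖ ^ (p - 2) * ⟪b, a⟫ ≤
      ‖a‖ ^ p + (p - 1) * t ^ p * ‖b‖ ^ p := by
  have hnorm : ‖b‖ ^ (p - 2) * ‖b‖ = ‖b‖ ^ (p - 1) := by
    rw [← rpow_add_one' (norm_nonneg b) (by linarith)]
    ring_nf
  calc p * t ^ (p - 1) * ‖b‖ ^ (p - 2) * ⟪b, a⟫
      ≤ p * t ^ (p - 1) * ‖b‖ ^ (p - 2) * (‖b‖ * ‖a‖) := by
        gcongr
        exact real_inner_le_norm b a
    _ = p * (‖a‖ * (t * ‖b‖) ^ (p - 1)) := by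
        rw [mul_rpow ht (norm_nonneg b), ← hnorm]
        ring
    _ ≤ ‖a‖ ^ p + (p - 1) * (t * ‖b‖) ^ p :=
        young_inequality_rpow_sub_one (norm_nonneg a) (mul_nonneg ht (norm_nonneg b)) hp
    _ = ‖a‖ ^ p + (p - 1) * t ^ p * ‖b‖ ^ p := by
        rw [mul_rpow ht (norm_nonneg b)]
        ring

variable [CompleteSpace E]

theorem HasGradientAt.rpow_div_rpow {u v : E → ℝ} {gu gv x : E} {p : ℝ}
    (hu : HasGradientAt u gu x) (hv : HasGradientAt v gv x) (hp : 1 ≤ p)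
    (hu0 : 0 ≤ u x) (hv0 : 0 < v x) :
    HasGradientAt (fun y => u y ^ p / v y ^ (p - 1))
      ((p * (u x / v x) ^ (p - 1)) • gu - ((p - 1) * (u x / v x) ^ p) • gv) x := by
  rw [hasGradientAt_iff_hasFDerivAt] at hu hv ⊢
  have hvp : v x ^ (p - 1) ≠ 0 := (rpow_pos_of_pos hv0 _).ne'
  have h := (hu.rpow_const (Or.inr hp)).mul
    ((hasDerivAt_inv hvp).comp_hasFDerivAt x (hv.rpow_const (p := p - 1) (Or.inl hv0.ne')))
  refine (h.congr_fderiv ?_).congr_of_eventuallyEq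
    (Filter.Eventually.of_forall fun y => div_eq_mul_inv _ _)
  ext w
  simp only [neg_smul, smul_neg, Function.comp_apply, add_apply, neg_apply, smul_apply,
    InnerProductSpace.toDual_apply_apply, smul_eq_mul, map_sub, map_smul, sub_apply]
  have hvp' : v x ^ p ≠ 0 := (rpow_pos_of_pos hv0 _).ne'
  rw [div_rpow hu0 hv0.le, div_rpow hu0 hv0.le]
  simp only [rpow_sub_one hv0.ne']
  field_simp
  ring

end InnerProductSpace

theorem stmt_8_general (N : ℕ) (p : ℝ) (hp : 1 < p)
    (Ω : Set (EuclideanSpace ℝ (Fin N)))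
    (u v : EuclideanSpace ℝ (Fin N) → ℝ)
    (hu : ∀ x ∈ Ω, DifferentiableAt ℝ u x)
    (hv : ∀ x ∈ Ω, DifferentiableAt ℝ v x)
    (hu0 : ∀ x ∈ Ω, 0 ≤ u x) (hv0 : ∀ x ∈ Ω, 0 < v x) :
    ∀ x ∈ Ω,
      (‖gradient u x‖ ^ p + (p - 1) * (u x / v x) ^ p * ‖gradient v x‖ ^ p
          - p * (u x / v x) ^ (p - 1) * ‖gradient v x‖ ^ (p - 2) * ⟪gradient v x, gradient u x⟫
        = ‖gradient u x‖ ^ p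
          - ⟪gradient (fun y => u y ^ p / v y ^ (p - 1)) x, ‖gradient v x‖ ^ (p - 2) • gradient v x⟫) ∧
      0 ≤ ‖gradient u x‖ ^ p + (p - 1) * (u x / v x) ^ p * ‖gradient v x‖ ^ p
          - p * (u x / v x) ^ (p - 1) * ‖gradient v x‖ ^ (p - 2) * ⟪gradient v x, gradient u x⟫ := by
  intro x hx
  have hgrad := ((hu x hx).hasGradientAt.rpow_div_rpow (hv x hx).hasGradientAt hp.le
    (hu0 x hx) (hv0 x hx)).gradient
  rw [hgrad, inner_smul_sub_smul_rpow_norm_smul (by linarith)]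
  exact ⟨by ring, sub_nonneg.mpr <| picone_inner_le hp (div_nonneg (hu0 x hx) (hv0 x hx).le) _ _⟩

theorem stmt_8 (N : ℕ) (p : ℝ) (hp : 1 < p)
    (Ω : Set (EuclideanSpace ℝ (Fin N))) (hΩ : IsOpen Ω)
    (u v : EuclideanSpace ℝ (Fin N) → ℝ)
    (hu : ∀ x ∈ Ω, DifferentiableAt ℝ u x)
    (hv : ∀ x ∈ Ω, DifferentiableAt ℝ v x)
    (hu0 : ∀ x ∈ Ω, 0 ≤ u x) (hv0 : ∀ x ∈ Ω, 0 < v x) :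
    ∀ x ∈ Ω,
      (‖gradient u x‖ ^ p + (p - 1) * (u x / v x) ^ p * ‖gradient v x‖ ^ p
          - p * (u x / v x) ^ (p - 1) * ‖gradient v x‖ ^ (p - 2) * ⟪gradient v x, gradient u x⟫
        = ‖gradient u x‖ ^ p
          - ⟪gradient (fun y => u y ^ p / v y ^ (p - 1)) x, ‖gradient v x‖ ^ (p - 2) • gradient v x⟫) ∧
      0 ≤ ‖gradient u x‖ ^ p + (p - 1) * (u x / v x) ^ p * ‖gradient v x‖ ^ p
          - p * (u x / v x) ^ (p - 1) * ‖gradient v x‖ ^ (p - 2) * ⟪gradient v x, gradient u x⟫ :=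
  stmt_8_general N p hp Ω u v hu hv hu0 hv0
end

section
/- Let $N \ge 2$, $p > 1$, $R > 0$. If $N = 2$ and $p = 4$, the functions $u_1 \equiv 0$ and $u_2(x) = \frac{1}{8}(R^2 - |x|^2)$ are both classical solutions of $-\Delta_4 u = |\nabla u|^2$ in the ball $B(0,R) \subset \mathbb{R}^2$ with $u = 0$ on $\partial B(0,R)$; in particular the Dirichlet problem $-\Delta_4 u = |\nabla u|^2$, $u \in W_0^{1,4}(B(0,R)) \cap L^\infty(B(0,R))$, has at least two distinct solutions. -/
/-!
For `u = (c - ‖x‖²) / (2(N + 2))` on `ℝᴺ` one has `∇u = -x / (N + 2)`, hence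
`‖∇u‖² ∇u = -‖x‖² x / (N + 2)³`, whose divergence is `-‖x‖² / (N + 2)² = -‖∇u‖²`.
With `N = 2` and `c = R²` this is `u₂`, which vanishes on the sphere of radius `R` and differs
from the trivial solution `u₁ ≡ 0` at the origin.
-/

theorem gradient_const_sub_norm_sq_div {F : Type*} [NormedAddCommGroup F] [InnerProductSpace ℝ F]
    [CompleteSpace F] (c a : ℝ) :
    gradient (fun y : F => (c - ‖y‖ ^ 2) / a) = fun y => (-(2 / a)) • y := by
  funext x
  refine HasGradientAt.gradient ?_
  rw [hasGradientAt_iff_hasFDerivAt]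
  simp_rw [div_eq_mul_inv]
  refine (((hasStrictFDerivAt_norm_sq x).hasFDerivAt.const_sub c).mul_const a⁻¹).congr_fderiv ?_
  ext v
  simp
  ring

section Euclidean

variable {n : ℕ}

local notation "𝔼" => EuclideanSpace ℝ (Fin n)

noncomputable def divergence (V : 𝔼 → 𝔼) (x : 𝔼) : ℝ :=
  ∑ i, fderiv ℝ V x (EuclideanSpace.single i 1) i

noncomputable def fourLaplacian (u : 𝔼 → ℝ) (x : 𝔼) : ℝ :=
  divergence (fun y => ‖gradient u y‖ ^ 2 • gradient u y) x

theorem divergence_const_mul_norm_sq_smul (c : ℝ) (x : 𝔼) :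
    divergence (fun y => (c * ‖y‖ ^ 2) • y) x = c * (n + 2) * ‖x‖ ^ 2 := by
  have hV : HasFDerivAt (fun y => (c * ‖y‖ ^ 2) • y) _ x :=
    ((hasStrictFDerivAt_norm_sq x).hasFDerivAt.const_mul c).smul (hasFDerivAt_id x)
  have hsq (i : Fin n) : c * (2 * x i) * x i = 2 * c * x i ^ 2 := by ring
  rw [divergence, hV.fderiv]
  simp [EuclideanSpace.real_norm_sq_eq, EuclideanSpace.inner_single_right,
    Finset.sum_add_distrib, hsq, ← Finset.mul_sum]
  ring

theorem fourLaplacian_const (c : ℝ) (x : 𝔼) : fourLaplacian (fun _ => c) x = 0 := by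
  simp [fourLaplacian, divergence]

theorem neg_fourLaplacian_const_sub_norm_sq_div (c a : ℝ) (ha : a = 2 * (n + 2)) (x : 𝔼) :
    -fourLaplacian (fun y => (c - ‖y‖ ^ 2) / a) x
      = ‖gradient (fun y => (c - ‖y‖ ^ 2) / a) x‖ ^ 2 := by
  have hk : (2 / a) * (n + 2) = 1 := by rw [ha]; field_simp
  have hV : (fun y : 𝔼 => ‖(-(2 / a)) • y‖ ^ 2 • (-(2 / a)) • y)
      = fun y => (-(2 / a) ^ 3 * ‖y‖ ^ 2) • y := by
    funext y
    rw [smul_smul, norm_smul, mul_pow, Real.norm_eq_abs, sq_abs]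
    ring_nf
  rw [fourLaplacian, gradient_const_sub_norm_sq_div, hV, divergence_const_mul_norm_sq_smul,
    norm_smul, mul_pow, Real.norm_eq_abs, sq_abs]
  linear_combination (2 / a) ^ 2 * ‖x‖ ^ 2 * hk

end Euclidean

theorem stmt_19 (R : ℝ) (hR : 0 < R) :
    ∀ u₁ u₂ : EuclideanSpace ℝ (Fin 2) → ℝ,
      u₁ = (fun _ => 0) → u₂ = (fun x => (R ^ 2 - ‖x‖ ^ 2) / 8) →
      (∀ u ∈ ({u₁, u₂} : Set (EuclideanSpace ℝ (Fin 2) → ℝ)),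
        (∀ x, ‖x‖ < R →
          -(∑ i : Fin 2,
              fderiv ℝ (fun y => ‖gradient u y‖ ^ 2 • gradient u y) x
                (EuclideanSpace.single i 1) i)
            = ‖gradient u x‖ ^ 2) ∧
        (∀ x, ‖x‖ = R → u x = 0)) ∧
      u₁ ≠ u₂ := by
  rintro u₁ u₂ rfl rfl
  refine ⟨?_, fun h => ?_⟩
  · rintro u (rfl | rfl)
    · refine ⟨fun x _ => ?_, fun _ _ => rfl⟩
      change -fourLaplacian _ x = _
      simp [fourLaplacian_const]
    · refine ⟨fun x _ => neg_fourLaplacian_const_sub_norm_sq_div _ _ (by norm_num) x, ?_⟩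
      intro x hx
      simp [hx]
  · have h0 : (0 : ℝ) = R ^ 2 / 8 := by simpa using congrFun h 0
    nlinarith
end
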